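/- The point 0 is the unique non-periodic preimage of the fixed point ∞ under θ, and ψ(0) = −1 has multiplicative order 2 in F_{3^n}*; thus ∞ is the root of a reversed binary tree whose unique level-1 vertex is 0. -/

import Mathlib

open OnePoint

variable (F : Type*) [Field F] [DecidableEq F]

/-- The map `θ(x) = x + x⁻¹`, with `θ(0) = θ(∞) = ∞`. -/
def theta : OnePoint F → OnePoint F
  | Option.some x => if x = 0 then ∞ else Option.some (x + x⁻¹)
  | Option.none => ∞

/-- The inverse-square map `s(x) = x⁻²`, with `s(0) = ∞`, `s(∞) = 0`. -/
def sMap : OnePoint F → OnePoint F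
  | Option.some x => if x = 0 then ∞ else Option.some (x⁻¹ ^ 2)
  | Option.none => Option.some 0

/-- The involution `ψ(x) = (x+1)/(x-1)`, with `ψ(1) = ∞`, `ψ(∞) = 1`. -/
def psi : OnePoint F → OnePoint F
  | Option.some x => if x = 1 then ∞ else Option.some ((x + 1) / (x - 1))
  | Option.none => Option.some 1

theorem Function.iterate_eq_of_map_eq_isFixedPt {α : Type*} {f : α → α} {a b : α}
    (hab : f a = b) (hb : Function.IsFixedPt f b) {k : ℕ} (hk : 0 < k) : f^[k] a = b := by
  obtain ⟨k, rfl⟩ := Nat.exists_eq_add_of_lt hk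
  rw [zero_add, Function.iterate_succ_apply, hab, hb.iterate k]

theorem Function.not_isPeriodicPt_of_map_eq_isFixedPt {α : Type*} {f : α → α} {a b : α}
    (hab : f a = b) (hb : Function.IsFixedPt f b) (hne : a ≠ b) {k : ℕ} (hk : 0 < k) :
    ¬ Function.IsPeriodicPt f k a :=
  fun h ↦ hne (h.symm.trans (Function.iterate_eq_of_map_eq_isFixedPt hab hb hk))

theorem orderOf_neg_one_eq_two {R : Type*} [Ring R] [Nontrivial R] (h : ringChar R ≠ 2) :
    orderOf (-1 : R) = 2 := by
  rw [orderOf_neg_one, if_neg h]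

theorem ringChar_eq_of_card_eq_prime_pow {K : Type*} [CommRing K] [IsDomain K] [Fintype K] {p n : ℕ}
    [Fact p.Prime] (hK : Fintype.card K = p ^ n) : ringChar K = p :=
  have := charP_of_card_eq_prime_pow hK
  ringChar.eq K p

section

variable {F}

theorem theta_infty : theta F ∞ = ∞ := rfl

theorem theta_coe (x : F) : theta F x = if x = 0 then ∞ else ((x + x⁻¹ : F) : OnePoint F) := rfl

theorem theta_coe_zero : theta F ((0 : F) : OnePoint F) = ∞ := by
  simp [theta_coe]

theorem theta_eq_infty_iff (x : OnePoint F) :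
    theta F x = ∞ ↔ x = ((0 : F) : OnePoint F) ∨ x = ∞ := by
  induction x using OnePoint.rec with
  | infty => simp [theta_infty]
  | coe x => by_cases hx : x = 0 <;> simp [theta_coe, hx]

theorem psi_coe (x : F) :
    psi F x = if x = 1 then ∞ else (((x + 1) / (x - 1) : F) : OnePoint F) := rfl

theorem psi_coe_zero : psi F ((0 : F) : OnePoint F) = ((-1 : F) : OnePoint F) := by
  simp [psi_coe]

end

theorem tree_at_infinity [Fintype F] (n : ℕ)
    (hF : Fintype.card F = 3 ^ n) :
    theta F ∞ = ∞ ∧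
    (∀ x : OnePoint F, theta F x = ∞ ↔ x = ((0 : F) : OnePoint F) ∨ x = ∞) ∧
    psi F ((0 : F) : OnePoint F) = ((-1 : F) : OnePoint F) ∧
    orderOf (-1 : F) = 2 ∧
    ¬ ∃ k : ℕ, 0 < k ∧ (theta F)^[k] ((0 : F) : OnePoint F) = ((0 : F) : OnePoint F) := by
  have hchar : ringChar F = 3 := ringChar_eq_of_card_eq_prime_pow hF
  refine ⟨theta_infty, theta_eq_infty_iff, psi_coe_zero,
    orderOf_neg_one_eq_two (by rw [hchar]; decide), ?_⟩
  rintro ⟨k, hk, hperiodic⟩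
  exact Function.not_isPeriodicPt_of_map_eq_isFixedPt theta_coe_zero theta_infty
    (OnePoint.coe_ne_infty 0) hk hperiodic
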